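/- arXiv:2506.11334 — 4 statements merged into one kernel-verified Lean document; each statement's English description precedes it below -/
import Mathlib

section
/- For every alphabet Σ with a distinguished symbol ! ∉ Σ, there exists a reversible basic 0-pebble transducer with 5 states computing the iterated reverse function over Σ ∪ {!}. -/
/-!
Common framework: pebble transducers with equality tests
(following "Reversible Pebble Transducers").
-/

namespace RevPeb

/-- Atomic tests: `headPeb i` is `(h = p_i)`, `pebPeb i j` is `(p_i = p_j)`
(indices are 0-based, pebble `i+1` of the paper). -/
inductive Atom (k : ℕ) : Type where
  | headPeb : Fin k → Atom k
  | pebPeb : Fin k → Fin k → Atom k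

/-- Pebble operations (0-based: `drop i`/`lift i` refer to pebble `i+1` of the paper). -/
inductive PebOp (k : ℕ) : Type where
  | nop : PebOp k
  | drop : Fin k → PebOp k
  | lift : Fin k → PebOp k

/-- A test is a conjunction of literals: an atom together with a polarity. -/
abbrev Test (k : ℕ) : Type := List (Atom k × Bool)

/-- A transition `(q, a, φ, op, q')`; `letter = none` encodes the endmarker `#`. -/
structure PTrans (Q Sg : Type*) (k : ℕ) where
  src : Q
  letter : Option Sg
  test : Test k
  op : PebOp k
  tgt : Q

/-- A `k`-pebble transducer with equality tests (data part).
`dir q` is the polarity of state `q` (which part of `Q_{+1} ⊎ Q_0 ⊎ Q_{-1}` it lies in). -/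
structure PT (Q Sg Gm : Type*) (k : ℕ) where
  dir : Q → SignType
  qinit : Q
  qfin : Q
  δ : Set (PTrans Q Sg k)
  μ : PTrans Q Sg k → List Gm

variable {Q Sg Gm : Type*} {k : ℕ}

/-- Well-formedness: `q_i, q_f ∈ Q_0`, `q_i ≠ q_f`, no transition leaves `q_f`
nor enters `q_i`, and the transition set is finite. -/
def PT.WF (T : PT Q Sg Gm k) : Prop :=
  T.dir T.qinit = 0 ∧ T.dir T.qfin = 0 ∧ T.qinit ≠ T.qfin ∧
  (∀ t ∈ T.δ, t.src ≠ T.qfin ∧ t.tgt ≠ T.qinit) ∧ T.δ.Finite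

/-- Letter of the circular word `#u` at position `h ∈ {0,…,|u|}`;
`none` is the endmarker `#` (at position 0). -/
def letterAt (u : List Sg) (h : ℕ) : Option Sg :=
  if h = 0 then none else u[h-1]?

/-- Satisfaction of an atomic test by a pebble stack and head position. -/
def atomSat (peb : List ℕ) (h : ℕ) : Atom k → Prop
  | .headPeb i => (i : ℕ) < peb.length ∧ peb.getD i 0 = h
  | .pebPeb i j => (i : ℕ) < peb.length ∧ (j : ℕ) < peb.length ∧ peb.getD i 0 = peb.getD j 0

/-- Satisfaction of a test (conjunction of literals). -/
def testSat (peb : List ℕ) (h : ℕ) (φ : Test k) : Prop :=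
  ∀ l ∈ φ, (atomSat peb h l.1 ↔ l.2 = true)

/-- Executability of a pebble operation: `drop i` (pebble `i+1` of the paper) needs
`|peb| = i`, `lift i` needs `|peb| = i+1` and the top pebble at the head. -/
def opEnabled (peb : List ℕ) (h : ℕ) : PebOp k → Prop
  | .nop => True
  | .drop n => peb.length = (n : ℕ)
  | .lift n => peb.length = (n : ℕ) + 1 ∧ peb.getD (n : ℕ) 0 = h

/-- Effect of a pebble operation on the pebble stack. -/
def opApply (peb : List ℕ) (h : ℕ) : PebOp k → List ℕ
  | .nop => peb
  | .drop _ => peb ++ [h]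
  | .lift _ => peb.dropLast

/-- Head movement on the circular word `#u` (`len = |u|`, positions mod `len+1`). -/
def nextHead (len h : ℕ) : SignType → ℕ
  | .pos => (h + 1) % (len + 1)
  | .zero => h
  | .neg => (h + len) % (len + 1)

/-- A configuration `(q, peb, h)`. -/
structure Config (Q : Type*) where
  q : Q
  peb : List ℕ
  h : ℕ

/-- One step of the transducer on input `u` using transition `t`. -/
def PT.StepT (T : PT Q Sg Gm k) (u : List Sg) (t : PTrans Q Sg k) (C C' : Config Q) : Prop :=
  t ∈ T.δ ∧ C.q = t.src ∧ C.h ≤ u.length ∧ C.peb.length ≤ k ∧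
  letterAt u C.h = t.letter ∧
  testSat C.peb C.h t.test ∧ opEnabled C.peb C.h t.op ∧
  C'.q = t.tgt ∧ C'.peb = opApply C.peb C.h t.op ∧
  C'.h = nextHead u.length C.h (T.dir t.tgt)

/-- Runs, accumulating the produced output word. -/
inductive PT.Run (T : PT Q Sg Gm k) (u : List Sg) :
    Config Q → Config Q → List Gm → Prop where
  | refl (C : Config Q) : PT.Run T u C C []
  | step {C C' C'' : Config Q} (t : PTrans Q Sg k) {v : List Gm} :
      T.StepT u t C C' → PT.Run T u C' C'' v → PT.Run T u C C'' (T.μ t ++ v)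

/-- Semantics: pairs `(u,v)` such that some accepting run on `#u` outputs `v`. -/
def PT.Sem (T : PT Q Sg Gm k) : Set (List Sg × List Gm) :=
  {p | T.Run p.1 ⟨T.qinit, [], 0⟩ ⟨T.qfin, [], 0⟩ p.2}

/-- `t` is enabled at configuration `C` (on input `u`). -/
def PT.Enabled (T : PT Q Sg Gm k) (u : List Sg) (t : PTrans Q Sg k) (C : Config Q) : Prop :=
  ∃ C', T.StepT u t C C'

/-- `t` is reverse-enabled at configuration `C'` (on input `u`). -/
def PT.RevEnabled (T : PT Q Sg Gm k) (u : List Sg) (t : PTrans Q Sg k) (C' : Config Q) : Prop :=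
  ∃ C, T.StepT u t C C'

/-- Determinism: two transitions simultaneously enabled at a common configuration coincide. -/
def PT.Deterministic (T : PT Q Sg Gm k) : Prop :=
  ∀ (u : List Sg) (t₁ t₂ : PTrans Q Sg k) (C : Config Q),
    T.Enabled u t₁ C → T.Enabled u t₂ C → t₁ = t₂

/-- Reverse-determinism. -/
def PT.RevDeterministic (T : PT Q Sg Gm k) : Prop :=
  ∀ (u : List Sg) (t₁ t₂ : PTrans Q Sg k) (C' : Config Q),
    T.RevEnabled u t₁ C' → T.RevEnabled u t₂ C' → t₁ = t₂

/-- Reversible = deterministic and reverse-deterministic. -/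
def PT.Reversible (T : PT Q Sg Gm k) : Prop := T.Deterministic ∧ T.RevDeterministic

/-- A basic pebble transducer uses no pebble-pebble equality atoms. -/
def PT.Basic (T : PT Q Sg Gm k) : Prop :=
  ∀ t ∈ T.δ, ∀ l ∈ t.test, ∀ i j : Fin k, l.1 ≠ Atom.pebPeb i j

/-- `T` computes the partial function `f` (encoded with `Option`): `⟦T⟧` is the graph of `f`. -/
def PT.Computes (T : PT Q Sg Gm k) (f : List Sg → Option (List Gm)) : Prop :=
  ∀ u v, (u, v) ∈ T.Sem ↔ f u = some v

end RevPeb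

namespace RevPeb

/-- Helper for the iterated reverse function: `cur` holds the current block, reversed. -/
def iterRevGo {α : Type*} (cur : List α) : List (Option α) → List (Option α)
  | [] => cur.map some
  | none :: rest => cur.map some ++ none :: iterRevGo [] rest
  | some a :: rest => iterRevGo (a :: cur) rest

/-- The iterated reverse function over `Σ ∪ {!}` (`none` is the separator `!`):
`u₀!u₁!⋯!uₙ ↦ u₀ᴿ!u₁ᴿ!⋯!uₙᴿ`. -/
def iterRevFun {α : Type*} (l : List (Option α)) : List (Option α) :=
  iterRevGo [] l

/-! For each block `uᵢ` the transducer sweeps right to the delimiter ending it, sweeps left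
copying the letters (so they come out reversed), sweeps right again silently and, at a `!`,
outputs it and continues with the next block; at `#` it stops. It is reverse deterministic
because each state is entered from its predecessors on pairwise distinct letters, and the head
move of each state can be undone. -/

namespace PT

variable {Q Sg Gm : Type*} {k : ℕ}

theorem StepT.right_unique {T : PT Q Sg Gm k} {u : List Sg} {t : PTrans Q Sg k}
    {C C₁ C₂ : Config Q} (h₁ : T.StepT u t C C₁) (h₂ : T.StepT u t C C₂) : C₁ = C₂ := by
  obtain ⟨-, -, -, -, -, -, -, hq₁, hp₁, hh₁⟩ := h₁
  obtain ⟨-, -, -, -, -, -, -, hq₂, hp₂, hh₂⟩ := h₂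
  cases C₁; cases C₂
  simp_all

theorem Deterministic.run_output_unique {T : PT Q Sg Gm k} (hT : T.Deterministic)
    (hfin : ∀ t ∈ T.δ, t.src ≠ T.qfin) {u : List Sg} {C C' : Config Q} {v₁ v₂ : List Gm}
    (hC' : C'.q = T.qfin) (h₁ : T.Run u C C' v₁) (h₂ : T.Run u C C' v₂) : v₁ = v₂ := by
  induction h₁ generalizing v₂ with
  | refl C =>
    cases h₂ with
    | refl => rfl
    | step t hs _ => exact absurd (hs.2.1.symm.trans hC') (hfin t hs.1)
  | step t hs _ ih =>
    cases h₂ with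
    | refl => exact absurd (hs.2.1.symm.trans hC') (hfin t hs.1)
    | step t' hs' hr' =>
      obtain rfl := hT u t t' _ ⟨_, hs⟩ ⟨_, hs'⟩
      obtain rfl := hs.right_unique hs'
      rw [ih hC' hr']

theorem Deterministic.sem_eq {T : PT Q Sg Gm k} (hT : T.Deterministic)
    (hfin : ∀ t ∈ T.δ, t.src ≠ T.qfin) (f : List Sg → List Gm)
    (hf : ∀ u, T.Run u ⟨T.qinit, [], 0⟩ ⟨T.qfin, [], 0⟩ (f u)) :
    T.Sem = {p | p.2 = f p.1} := by
  ext ⟨u, v⟩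
  exact ⟨fun h => hT.run_output_unique hfin rfl h (hf u), fun (h : v = f u) => h ▸ hf u⟩

end PT

theorem letterAt_succ_length_of_eq_append {α : Type*} {u v r : List α} {x : α}
    (hu : u = v ++ x :: r) : letterAt u (v.length + 1) = some x := by
  simp [letterAt, hu]

theorem nextHead_le {n h : ℕ} (d : SignType) (hh : h ≤ n) : nextHead n h d ≤ n := by
  cases d
  · exact hh
  · exact Nat.lt_succ_iff.mp (Nat.mod_lt _ n.succ_pos)
  · exact Nat.lt_succ_iff.mp (Nat.mod_lt _ n.succ_pos)

theorem nextHead_pos_of_lt {n h : ℕ} (hh : h < n) : nextHead n h .pos = h + 1 :=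
  Nat.mod_eq_of_lt (by omega)

theorem nextHead_pos_self (n : ℕ) : nextHead n n .pos = 0 :=
  Nat.mod_self _

theorem nextHead_neg_nextHead_pos {n h : ℕ} (hh : h ≤ n) :
    nextHead n (nextHead n h .pos) .neg = h := by
  simp only [nextHead]
  rw [Nat.mod_add_mod, show h + 1 + n = h + (n + 1) by omega, Nat.add_mod_right,
    Nat.mod_eq_of_lt (by omega)]

theorem nextHead_pos_nextHead_neg {n h : ℕ} (hh : h ≤ n) :
    nextHead n (nextHead n h .neg) .pos = h := by
  simp only [nextHead]
  rw [Nat.mod_add_mod, show h + n + 1 = h + (n + 1) by omega, Nat.add_mod_right,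
    Nat.mod_eq_of_lt (by omega)]

theorem nextHead_injOn {n h₁ h₂ : ℕ} (d : SignType) (h₁n : h₁ ≤ n) (h₂n : h₂ ≤ n)
    (he : nextHead n h₁ d = nextHead n h₂ d) : h₁ = h₂ := by
  cases d
  · exact he
  · rw [← nextHead_pos_nextHead_neg h₁n, ← nextHead_pos_nextHead_neg h₂n, he]
  · rw [← nextHead_neg_nextHead_pos h₁n, ← nextHead_neg_nextHead_pos h₂n, he]

namespace PT

variable {Q Sg Gm : Type*}

/-- The `0`-pebble transducer whose transitions read no pebbles and follow the partial
transition function `τ : state → letter → (state, output)`. -/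
def ofFun (dir : Q → SignType) (qi qf : Q) (τ : Q → Option Sg → Option (Q × List Gm)) :
    PT Q Sg Gm 0 where
  dir := dir
  qinit := qi
  qfin := qf
  δ := {t | t.test = [] ∧ t.op = .nop ∧ ∃ o, τ t.src t.letter = some (t.tgt, o)}
  μ t := ((τ t.src t.letter).map Prod.snd).getD []

variable {dir : Q → SignType} {qi qf : Q} {τ : Q → Option Sg → Option (Q × List Gm)}

theorem ofFun_trans_ext {t₁ t₂ : PTrans Q Sg 0} (h₁ : t₁ ∈ (ofFun dir qi qf τ).δ)
    (h₂ : t₂ ∈ (ofFun dir qi qf τ).δ) (hsrc : t₁.src = t₂.src) (hlet : t₁.letter = t₂.letter)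
    (htgt : t₁.tgt = t₂.tgt) : t₁ = t₂ := by
  cases t₁; cases t₂
  obtain ⟨rfl, rfl, -⟩ := h₁
  obtain ⟨rfl, rfl, -⟩ := h₂
  simp_all

theorem ofFun_run_step {u : List Sg} {q q' : Q} {h : ℕ} {o w : List Gm} {C : Config Q}
    (hh : h ≤ u.length) (hτ : τ q (letterAt u h) = some (q', o))
    (hC : (ofFun dir qi qf τ).Run u ⟨q', [], nextHead u.length h (dir q')⟩ C w) :
    (ofFun dir qi qf τ).Run u ⟨q, [], h⟩ C (o ++ w) := by
  have hstep : (ofFun dir qi qf τ).StepT u ⟨q, letterAt u h, [], .nop, q'⟩ ⟨q, [], h⟩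
      ⟨q', [], nextHead u.length h (dir q')⟩ :=
    ⟨⟨rfl, rfl, o, hτ⟩, rfl, hh, le_rfl, rfl, by simp [testSat], trivial, rfl, rfl, rfl⟩
  simpa [ofFun, hτ] using PT.Run.step _ hstep hC

theorem ofFun_run_step_silent {u : List Sg} {q q' : Q} {h : ℕ} {w : List Gm} {C : Config Q}
    (hh : h ≤ u.length) (hτ : τ q (letterAt u h) = some (q', []))
    (hC : (ofFun dir qi qf τ).Run u ⟨q', [], nextHead u.length h (dir q')⟩ C w) :
    (ofFun dir qi qf τ).Run u ⟨q, [], h⟩ C w :=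
  ofFun_run_step hh hτ hC

theorem ofFun_basic : (ofFun dir qi qf τ).Basic := by
  rintro t ⟨htest, -⟩ l hl
  simp [htest] at hl

theorem ofFun_deterministic : (ofFun dir qi qf τ).Deterministic := by
  rintro u t₁ t₂ C ⟨-, hm₁, hq₁, -, -, hl₁, -⟩ ⟨-, hm₂, hq₂, -, -, hl₂, -⟩
  have hsrc : t₁.src = t₂.src := hq₁.symm.trans hq₂
  have hlet : t₁.letter = t₂.letter := hl₁.symm.trans hl₂
  obtain ⟨o₁, hτ₁⟩ := hm₁.2.2
  obtain ⟨o₂, hτ₂⟩ := hm₂.2.2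
  rw [hsrc, hlet, hτ₂, Option.some_inj, Prod.mk.injEq] at hτ₁
  exact ofFun_trans_ext hm₁ hm₂ hsrc hlet hτ₁.1.symm

theorem ofFun_revDeterministic
    (hτ : ∀ q₁ q₂ a q' o₁ o₂, τ q₁ a = some (q', o₁) → τ q₂ a = some (q', o₂) → q₁ = q₂) :
    (ofFun dir qi qf τ).RevDeterministic := by
  rintro u t₁ t₂ C' ⟨C₁, hm₁, hq₁, hb₁, -, hl₁, -, -, ht₁, -, hh₁⟩
    ⟨C₂, hm₂, hq₂, hb₂, -, hl₂, -, -, ht₂, -, hh₂⟩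
  have htgt : t₁.tgt = t₂.tgt := ht₁.symm.trans ht₂
  rw [htgt] at hh₁
  have hhead : C₁.h = C₂.h := nextHead_injOn _ hb₁ hb₂ (hh₁.symm.trans hh₂)
  have hlet : t₁.letter = t₂.letter := by rw [← hl₁, ← hl₂, hhead]
  obtain ⟨o₁, hτ₁⟩ := hm₁.2.2
  obtain ⟨o₂, hτ₂⟩ := hm₂.2.2
  rw [hlet, htgt] at hτ₁
  exact ofFun_trans_ext hm₁ hm₂ (hτ _ _ _ _ _ _ hτ₁ hτ₂) hlet htgt

theorem ofFun_wf [Finite Q] [Finite Sg] (hqi : dir qi = 0) (hqf : dir qf = 0) (hne : qi ≠ qf)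
    (hfin : ∀ a, τ qf a = none) (hinit : ∀ q a o, τ q a ≠ some (qi, o)) :
    (ofFun dir qi qf τ).WF := by
  refine ⟨hqi, hqf, hne, ?_, ?_⟩
  · rintro t ⟨-, -, o, hτ⟩
    refine ⟨fun h => ?_, fun h => hinit _ _ o (h ▸ hτ)⟩
    rw [show t.src = qf from h, hfin] at hτ
    cases hτ
  · refine (Set.finite_range fun p : Q × Option Sg =>
      (⟨p.1, p.2, [], .nop, ((τ p.1 p.2).map Prod.fst).getD p.1⟩ : PTrans Q Sg 0)).subset ?_
    rintro ⟨src, letter, test, op, tgt⟩ ⟨rfl, rfl, o, hτ⟩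
    exact ⟨(src, letter), by simp [hτ]⟩

end PT

namespace IterRev

inductive St : Type
  | init | forward | backward | rescan | final
  deriving DecidableEq

instance : Fintype St :=
  ⟨{.init, .forward, .backward, .rescan, .final}, fun q => by cases q <;> decide⟩

/-- `none` is the endmarker `#`, `some none` the separator `!`. -/
def IsDelim {Sg : Type*} (x : Option (Option Sg)) : Prop := x = none ∨ x = some none

def dir : St → SignType
  | .forward | .rescan => .pos
  | .backward => .neg
  | .init | .final => .zero

def trans {Sg : Type*} : St → Option (Option Sg) → Option (St × List (Option Sg))
  | .init, none => some (.forward, [])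
  | .forward, some (some _) => some (.forward, [])
  | .forward, _ => some (.backward, [])
  | .backward, some (some a) => some (.backward, [some a])
  | .backward, _ => some (.rescan, [])
  | .rescan, some (some _) => some (.rescan, [])
  | .rescan, some none => some (.forward, [none])
  | .rescan, none => some (.final, [])
  | _, _ => none

variable {Sg : Type*}

theorem trans_src_eq {q₁ q₂ q' : St} {a : Option (Option Sg)} {o₁ o₂ : List (Option Sg)}
    (h₁ : trans q₁ a = some (q', o₁)) (h₂ : trans q₂ a = some (q', o₂)) : q₁ = q₂ := by
  rcases a with _ | _ | a <;> cases q₁ <;> cases q₂ <;> cases q' <;> simp_all [trans]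

theorem trans_final (a : Option (Option Sg)) : trans .final a = none := by
  rcases a with _ | _ | a <;> rfl

theorem trans_ne_init (q : St) (a : Option (Option Sg)) (o : List (Option Sg)) :
    trans q a ≠ some (.init, o) := by
  rcases a with _ | _ | a <;> cases q <;> simp [trans]

theorem trans_forward_of_isDelim {x : Option (Option Sg)} (hx : IsDelim x) :
    trans .forward x = some (.backward, []) := by
  rcases hx with rfl | rfl <;> rfl

theorem trans_backward_of_isDelim {x : Option (Option Sg)} (hx : IsDelim x) :
    trans .backward x = some (.rescan, []) := by
  rcases hx with rfl | rfl <;> rfl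

variable (Sg) in
abbrev iterRevPT : PT St (Option Sg) (Option Sg) 0 := PT.ofFun dir .init .final trans

variable (u : List (Option Sg))

theorem run_skip_block {q : St} (hq : dir q = .pos)
    (hloop : ∀ a : Sg, trans q (some (some a)) = some (q, [])) {C : Config St}
    {w : List (Option Sg)} (b : List Sg) (v r : List (Option Sg))
    (hu : u = v ++ b.map some ++ r)
    (hC : (iterRevPT Sg).Run u ⟨q, [], nextHead u.length (v.length + b.length) .pos⟩ C w) :
    (iterRevPT Sg).Run u ⟨q, [], nextHead u.length v.length .pos⟩ C w := by
  induction b generalizing v with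
  | nil => simpa using hC
  | cons a b ih =>
    have hu' : u = v ++ some a :: (b.map some ++ r) := by simp [hu]
    have hlt : v.length < u.length := by simp [hu']
    rw [nextHead_pos_of_lt hlt]
    refine PT.ofFun_run_step_silent hlt
      (by rw [letterAt_succ_length_of_eq_append hu', hloop]) ?_
    rw [hq]
    simpa using ih (v ++ [some a]) (by simp [hu])
      (by simpa [Nat.add_assoc, Nat.add_comm 1] using hC)

theorem run_backward {C : Config St} {w : List (Option Sg)} (b : List Sg)
    (v r : List (Option Sg)) (hu : u = v ++ b.map some ++ r)
    (hC : (iterRevPT Sg).Run u ⟨.backward, [], v.length⟩ C w) :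
    (iterRevPT Sg).Run u ⟨.backward, [], v.length + b.length⟩ C (b.reverse.map some ++ w) := by
  induction b generalizing v w with
  | nil => simpa using hC
  | cons a b ih =>
    have hu' : u = v ++ some a :: (b.map some ++ r) := by simp [hu]
    have hlt : v.length < u.length := by simp [hu']
    have hstep : (iterRevPT Sg).Run u ⟨.backward, [], v.length + 1⟩ C (some a :: w) :=
      PT.ofFun_run_step (o := [some a]) hlt (by rw [letterAt_succ_length_of_eq_append hu']; rfl)
        (by rwa [dir, ← nextHead_pos_of_lt hlt, nextHead_neg_nextHead_pos hlt.le])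
    simpa [Nat.add_assoc, Nat.add_comm 1] using
      ih (v ++ [some a]) (by simp [hu]) (by simpa using hstep)

theorem run_block {C : Config St} {w : List (Option Sg)} (b : List Sg) (v r : List (Option Sg))
    (hu : u = v ++ b.map some ++ r) (hv : IsDelim (letterAt u v.length))
    (hr : IsDelim (letterAt u (nextHead u.length (v.length + b.length) .pos)))
    (hC : (iterRevPT Sg).Run u
      ⟨.rescan, [], nextHead u.length (v.length + b.length) .pos⟩ C w) :
    (iterRevPT Sg).Run u ⟨.forward, [], nextHead u.length v.length .pos⟩ C
      (b.reverse.map some ++ w) := by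
  have hlen : v.length + b.length ≤ u.length := by simp [hu]
  refine run_skip_block u rfl (fun _ => rfl) b v r hu
    (PT.ofFun_run_step_silent (nextHead_le _ hlen) (trans_forward_of_isDelim hr) ?_)
  rw [dir, nextHead_neg_nextHead_pos hlen]
  exact run_backward u b v r hu (PT.ofFun_run_step_silent (by omega)
    (trans_backward_of_isDelim hv) (run_skip_block u rfl (fun _ => rfl) b v r hu hC))

/-- Generalised over the accumulator `cur` of `iterRevGo`, so that induction on `r` is
structural. -/
theorem run_forward_iterRevGo (r : List (Option Sg)) (cur : List Sg) (v : List (Option Sg))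
    (hu : u = v ++ cur.reverse.map some ++ r) (hv : IsDelim (letterAt u v.length)) :
    (iterRevPT Sg).Run u ⟨.forward, [], nextHead u.length v.length .pos⟩ ⟨.final, [], 0⟩
      (iterRevGo cur r) := by
  induction r generalizing cur v with
  | nil =>
    have hlen : v.length + cur.reverse.length = u.length := by simp [hu]
    have hend : (iterRevPT Sg).Run u ⟨.rescan, [], 0⟩ ⟨.final, [], 0⟩ [] :=
      PT.ofFun_run_step_silent (Nat.zero_le _) rfl (PT.Run.refl _)
    simpa [iterRevGo] using
      run_block (w := []) u cur.reverse v [] hu hv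
        (by rw [hlen, nextHead_pos_self]; exact .inl rfl) (by rwa [hlen, nextHead_pos_self])
  | cons x r ih =>
    rcases x with _ | a
    · have hu' : u = (v ++ cur.reverse.map some) ++ none :: r := by simp [hu]
      have hsep := letterAt_succ_length_of_eq_append hu'
      have hlt : (v ++ cur.reverse.map some).length < u.length := by simp [hu']
      have hnext := ih [] (v ++ cur.reverse.map some ++ [none]) (by simp [hu'])
        (by rw [List.length_append, List.length_singleton]; exact .inr hsep)
      rw [List.length_append, List.length_singleton] at hnext
      simp only [List.length_append, List.length_map] at hnext hsep hlt
      simpa [iterRevGo] using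
        run_block (w := none :: iterRevGo [] r) u cur.reverse v (none :: r) hu hv
          (by rw [nextHead_pos_of_lt hlt, hsep]; exact .inr rfl)
          (by rw [nextHead_pos_of_lt hlt]
              exact PT.ofFun_run_step (o := [none]) hlt.nat_succ_le (by rw [hsep]; rfl) hnext)
    · exact ih (a :: cur) v (by simp [hu]) hv

theorem run_iterRevFun :
    (iterRevPT Sg).Run u ⟨.init, [], 0⟩ ⟨.final, [], 0⟩ (iterRevFun u) :=
  PT.ofFun_run_step_silent (Nat.zero_le _) rfl
    (run_forward_iterRevGo u u [] [] (by simp) (.inl rfl))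

end IterRev

/-- For every alphabet `Σ` (with an extra separator symbol `!`, encoded as
`none`), there is a reversible basic `0`-pebble transducer with 5 states computing the
iterated reverse function over `Σ ∪ {!}`. -/
theorem iterated_reverse_reversible (Sg : Type) [Fintype Sg] :
    ∃ (Q : Type) (instQ : Fintype Q) (T : PT Q (Option Sg) (Option Sg) 0),
      T.WF ∧ T.Basic ∧ T.Reversible ∧
      @Fintype.card Q instQ = 5 ∧
      T.Sem = {p : List (Option Sg) × List (Option Sg) | p.2 = iterRevFun p.1} := by
  have hwf : (IterRev.iterRevPT Sg).WF :=
    PT.ofFun_wf rfl rfl (by decide) IterRev.trans_final IterRev.trans_ne_init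
  have hdet : (IterRev.iterRevPT Sg).Deterministic := PT.ofFun_deterministic
  refine ⟨IterRev.St, inferInstance, IterRev.iterRevPT Sg, hwf, PT.ofFun_basic,
    ⟨hdet, PT.ofFun_revDeterministic fun _ _ _ _ _ _ => IterRev.trans_src_eq⟩, rfl,
    hdet.sem_eq (fun t ht => (hwf.2.2.2.1 t ht).1) _ IterRev.run_iterRevFun⟩

end RevPeb
end

section
/- For every head position h on #u, every pebble stack peb with |peb| ≤ k, every test φ and every pebble operation op: (1) (h,peb) ⊨ φ if and only if (Φ₁(peb), Φ₂(h,peb)) ⊨ φ; (2) (h,peb) ⊨ op if and only if (Φ₁(peb), Φ₂(h,peb)) ⊨ op; and (3) whenever op is executable, op(Φ₁(peb), Φ₂(h,peb)) = Φ₁(op(peb,h)). -/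
namespace RevPeb

/-- `Φ₁(peb)`: the `k×k` boolean matrix with `α i j = 1` iff pebbles `i` and `j` are both
dropped and lie on the same position (0-based indices). -/
def Phi1 (k : ℕ) (peb : List ℕ) (i j : Fin k) : Bool :=
  decide ((i : ℕ) < peb.length ∧ (j : ℕ) < peb.length ∧ peb.getD (i : ℕ) 0 = peb.getD (j : ℕ) 0)

/-- `Φ₂(h, peb)`: the bit vector with `b i = 1` iff pebble `i` is dropped on the head
position `h`. -/
def Phi2 (k : ℕ) (h : ℕ) (peb : List ℕ) (i : Fin k) : Bool :=
  decide ((i : ℕ) < peb.length ∧ peb.getD (i : ℕ) 0 = h)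

/-- Basic consistency of a pair `(α, b)`: invariants I1–I5. -/
def BasicConsistent {k : ℕ} (α : Fin k → Fin k → Bool) (b : Fin k → Bool) : Prop :=
  -- (I1) symmetry and transitivity
  (∀ i j : Fin k, α i j = true → α j i = true) ∧
  (∀ i j m : Fin k, α i j = true → α j m = true → α i m = true) ∧
  -- (I2)
  (∀ i : Fin k, b i = true → α i i = true) ∧
  -- (I3)
  (∀ i j : Fin k, b i = true → b j = true → α i j = true) ∧
  -- (I4)
  (∀ i j : Fin k, α i j = true → α i i = true ∧ α j j = true ∧ b i = b j) ∧
  -- (I5)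
  (∀ i j : Fin k, i < j → α j j = true → α i i = true)

end RevPeb

namespace RevPeb

/-- Diagonal entry of `α` at a (possibly out-of-range) natural index; out-of-range is
`false`. -/
def matDiag {k : ℕ} (α : Fin k → Fin k → Bool) (i : ℕ) : Bool :=
  if h : i < k then α ⟨i, h⟩ ⟨i, h⟩ else false

/-- Satisfaction of an atomic test by an abstract pair `(α, b)`. -/
def atomSatAbs {k : ℕ} (α : Fin k → Fin k → Bool) (b : Fin k → Bool) : Atom k → Prop
  | .headPeb i => b i = true
  | .pebPeb i j => α i j = true

/-- Satisfaction of a test by an abstract pair `(α, b)`. -/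
def testSatAbs {k : ℕ} (α : Fin k → Fin k → Bool) (b : Fin k → Bool) (φ : Test k) : Prop :=
  ∀ l ∈ φ, (atomSatAbs α b l.1 ↔ l.2 = true)

/-- Abstract executability of a pebble operation on `(α, b)` (0-based indices:
`drop n`/`lift n` refer to pebble `n+1` of the paper). -/
def opEnabledAbs {k : ℕ} (α : Fin k → Fin k → Bool) (b : Fin k → Bool) : PebOp k → Prop
  | .nop => True
  | .drop n => α n n = false ∧ ((n : ℕ) = 0 ∨ matDiag α ((n : ℕ) - 1) = true)
  | .lift n => b n = true ∧ matDiag α ((n : ℕ) + 1) = false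

/-- Abstract effect of a pebble operation on the matrix `α` (given the bit vector `b`). -/
def opApplyAbs {k : ℕ} (α : Fin k → Fin k → Bool) (b : Fin k → Bool) :
    PebOp k → (Fin k → Fin k → Bool)
  | .nop => α
  | .drop n => fun i j =>
      if i < n ∧ j < n then α i j
      else if i = n ∧ j = n then true
      else if i < n ∧ j = n then b i
      else if i = n ∧ j < n then b j
      else false
  | .lift n => fun i j => if i < n ∧ j < n then α i j else false

end RevPeb

namespace RevPeb

/-- Concrete and abstract satisfaction agree through `Φ`:
(1) a test holds at `(h, peb)` iff it holds at `(Φ₁(peb), Φ₂(h,peb))`;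
(2) an operation is executable at `(h, peb)` iff it is abstractly executable at
`(Φ₁(peb), Φ₂(h,peb))`; and
(3) when executable, the abstract update commutes with `Φ₁`:
`op(Φ₁(peb), Φ₂(h,peb)) = Φ₁(op(peb,h))`. -/
theorem phi_transition_consistent
    (k : ℕ) (hk : 1 ≤ k) {Sg : Type} (u : List Sg) (h : ℕ) (peb : List ℕ)
    (hh : h ≤ u.length) (hpeb : ∀ x ∈ peb, x ≤ u.length) (hlen : peb.length ≤ k) :
    (∀ φ : Test k, testSat peb h φ ↔ testSatAbs (Phi1 k peb) (Phi2 k h peb) φ) ∧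
    (∀ op : PebOp k, opEnabled peb h op ↔ opEnabledAbs (Phi1 k peb) (Phi2 k h peb) op) ∧
    (∀ op : PebOp k, opEnabled peb h op →
      opApplyAbs (Phi1 k peb) (Phi2 k h peb) op = Phi1 k (opApply peb h op)) := by
  have hatom : ∀ a : Atom k, atomSat peb h a ↔ atomSatAbs (Phi1 k peb) (Phi2 k h peb) a := by
    intro a
    cases a with
    | headPeb i => simp [atomSat, atomSatAbs, Phi2]
    | pebPeb i j => simp [atomSat, atomSatAbs, Phi1]
  refine ⟨fun φ => forall₂_congr fun l _ => iff_congr (hatom l.1) Iff.rfl, ?_, ?_⟩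
  · intro op
    cases op with
    | nop => simp [opEnabled, opEnabledAbs]
    | drop n =>
      show peb.length = (n : ℕ) ↔ _
      constructor
      · intro he
        refine ⟨?_, ?_⟩
        · simp only [Phi1, decide_eq_false_iff_not]
          rintro ⟨hlt, -⟩; omega
        · rcases Nat.eq_zero_or_pos (n : ℕ) with h0 | h0
          · exact Or.inl h0
          · right
            have hn1 : (n : ℕ) - 1 < k := by omega
            rw [matDiag, dif_pos hn1]
            simp only [Phi1, decide_eq_true_eq]
            exact ⟨by omega, by omega, by trivial⟩
      · rintro ⟨h1, h2⟩
        simp only [Phi1, decide_eq_false_iff_not] at h1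
        have hnl : ¬ ((n : ℕ) < peb.length) := fun hlt => h1 ⟨hlt, hlt, by trivial⟩
        rcases h2 with h0 | h2
        · omega
        · have hn1 : (n : ℕ) - 1 < k := by omega
          rw [matDiag, dif_pos hn1] at h2
          simp only [Phi1, decide_eq_true_eq] at h2
          omega
    | lift n =>
      show (peb.length = (n : ℕ) + 1 ∧ peb.getD (n : ℕ) 0 = h) ↔ _
      constructor
      · rintro ⟨h1, h2⟩
        refine ⟨?_, ?_⟩
        · simp only [Phi2, decide_eq_true_eq]; exact ⟨by omega, h2⟩
        · rw [matDiag]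
          split
          · simp only [Phi1, decide_eq_false_iff_not]
            rintro ⟨hlt, -⟩; omega
          · rfl
      · rintro ⟨h1, h2⟩
        simp only [Phi2, decide_eq_true_eq] at h1
        refine ⟨?_, h1.2⟩
        by_cases hnk : (n : ℕ) + 1 < k
        · rw [matDiag, dif_pos hnk] at h2
          simp only [Phi1, decide_eq_false_iff_not] at h2
          have : ¬ ((n : ℕ) + 1 < peb.length) := fun hlt => h2 ⟨hlt, hlt, by trivial⟩
          omega
        · omega
  · intro op hop
    cases op with
    | nop => rfl
    | drop n =>
      have hn : peb.length = (n : ℕ) := hop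
      funext i j
      have hgd : ∀ m : ℕ, m < (n : ℕ) → (peb ++ [h]).getD m 0 = peb.getD m 0 := by
        intro m hm; exact List.getD_append _ _ _ _ (by omega)
      have hgn : (peb ++ [h]).getD (n : ℕ) 0 = h := by
        rw [← hn, List.getD_append_right _ _ _ _ le_rfl]; simp
      simp only [opApplyAbs, opApply, Phi1, Phi2, List.length_append, List.length_singleton, hn]
      rcases lt_trichotomy i n with hi | hi | hi <;>
        rcases lt_trichotomy j n with hj | hj | hj
      · have hi' := Fin.lt_def.mp hi
        have hj' := Fin.lt_def.mp hj
        rw [if_pos ⟨hi, hj⟩, hgd _ hi', hgd _ hj', decide_eq_decide]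
        constructor <;> rintro ⟨-, -, e⟩ <;> exact ⟨by omega, by omega, e⟩
      · subst hj
        have hi' := Fin.lt_def.mp hi
        rw [if_neg (fun hc => lt_irrefl _ hc.2), if_neg (fun hc => absurd hc.1 hi.ne),
          if_pos ⟨hi, rfl⟩, hgd _ hi', hgn, decide_eq_decide]
        constructor
        · rintro ⟨-, e⟩; exact ⟨by omega, by omega, e⟩
        · rintro ⟨-, -, e⟩; exact ⟨by omega, e⟩
      · have hi' := Fin.lt_def.mp hi
        have hj' := Fin.lt_def.mp hj
        rw [if_neg (fun hc => absurd (Fin.lt_def.mp hc.2) (by omega)),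
          if_neg (fun hc => absurd (congrArg Fin.val hc.2) (by omega)),
          if_neg (fun hc => absurd (congrArg Fin.val hc.2) (by omega)),
          if_neg (fun hc => absurd (congrArg Fin.val hc.1) (by omega))]
        simp only [eq_comm (a := false), decide_eq_false_iff_not]
        rintro ⟨-, hlt, -⟩; omega
      · subst hi
        have hj' := Fin.lt_def.mp hj
        rw [if_neg (fun hc => lt_irrefl _ hc.1), if_neg (fun hc => absurd hc.2 hj.ne),
          if_neg (fun hc => lt_irrefl _ hc.1), if_pos ⟨rfl, hj⟩, hgd _ hj', hgn, decide_eq_decide]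
        constructor
        · rintro ⟨-, e⟩; exact ⟨by omega, by omega, e.symm⟩
        · rintro ⟨-, -, e⟩; exact ⟨by omega, e.symm⟩
      · subst hi; subst hj
        rw [if_neg (fun hc => lt_irrefl _ hc.1), if_pos ⟨rfl, rfl⟩]
        simp only [eq_comm (a := true), decide_eq_true_eq]
        exact ⟨by omega, by omega, by trivial⟩
      · subst hi
        have hj' := Fin.lt_def.mp hj
        rw [if_neg (fun hc => lt_irrefl _ hc.1),
          if_neg (fun hc => absurd (congrArg Fin.val hc.2) (by omega)),
          if_neg (fun hc => lt_irrefl _ hc.1),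
          if_neg (fun hc => absurd (Fin.lt_def.mp hc.2) (by omega))]
        simp only [eq_comm (a := false), decide_eq_false_iff_not]
        rintro ⟨-, hlt, -⟩; omega
      · have hi' := Fin.lt_def.mp hi
        rw [if_neg (fun hc => absurd (Fin.lt_def.mp hc.1) (by omega)),
          if_neg (fun hc => absurd (congrArg Fin.val hc.1) (by omega)),
          if_neg (fun hc => absurd (Fin.lt_def.mp hc.1) (by omega)),
          if_neg (fun hc => absurd (congrArg Fin.val hc.1) (by omega))]
        simp only [eq_comm (a := false), decide_eq_false_iff_not]
        rintro ⟨hlt, -⟩; omega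
      · have hi' := Fin.lt_def.mp hi
        rw [if_neg (fun hc => absurd (Fin.lt_def.mp hc.1) (by omega)),
          if_neg (fun hc => absurd (congrArg Fin.val hc.1) (by omega)),
          if_neg (fun hc => absurd (Fin.lt_def.mp hc.1) (by omega)),
          if_neg (fun hc => absurd (congrArg Fin.val hc.1) (by omega))]
        simp only [eq_comm (a := false), decide_eq_false_iff_not]
        rintro ⟨hlt, -⟩; omega
      · have hi' := Fin.lt_def.mp hi
        rw [if_neg (fun hc => absurd (Fin.lt_def.mp hc.1) (by omega)),
          if_neg (fun hc => absurd (congrArg Fin.val hc.1) (by omega)),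
          if_neg (fun hc => absurd (Fin.lt_def.mp hc.1) (by omega)),
          if_neg (fun hc => absurd (congrArg Fin.val hc.1) (by omega))]
        simp only [eq_comm (a := false), decide_eq_false_iff_not]
        rintro ⟨hlt, -⟩; omega
    | lift n =>
      obtain ⟨hn, hgh⟩ := hop
      funext i j
      have hdl : peb.dropLast.length = (n : ℕ) := by
        rw [List.length_dropLast]; omega
      have hgd : ∀ m : ℕ, m < (n : ℕ) → peb.dropLast.getD m 0 = peb.getD m 0 := by
        intro m hm
        rw [List.getD_eq_getElem _ _ (show m < peb.dropLast.length by omega),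
          List.getElem_dropLast, List.getD_eq_getElem _ _ (show m < peb.length by omega)]
      simp only [opApplyAbs, opApply, Phi1, hdl]
      by_cases hij : i < n ∧ j < n
      · obtain ⟨hi, hj⟩ := hij
        have hi' := Fin.lt_def.mp hi
        have hj' := Fin.lt_def.mp hj
        rw [if_pos ⟨hi, hj⟩, hgd _ hi', hgd _ hj', decide_eq_decide]
        constructor <;> rintro ⟨-, -, e⟩ <;> exact ⟨by omega, by omega, e⟩
      · rw [if_neg hij]
        simp only [eq_comm (a := false), decide_eq_false_iff_not]
        rintro ⟨h1, h2, -⟩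
        exact hij ⟨Fin.lt_def.mpr h1, Fin.lt_def.mpr h2⟩

end RevPeb
end

section
/- Let (α,b) be a pair of a k×k boolean matrix and a bit vector in {0,1}^k satisfying basic consistency, and let m = max{ i : α_{i,i} = 1 } (m = 0 if α is the zero matrix). Then for every word u with |u| > m, there exist a head position h on #u and a pebble stack peb of length m such that α = Φ₁(peb) and b = Φ₂(h,peb). -/
namespace RevPeb

/-- Every basic-consistent pair `(α, b)` is realizable: with
`m = max{ i : α i i = 1 }` (the number of dropped pebbles; `m = 0` for the zero matrix,
computed here as the cardinality of the diagonal support, which agrees with the maximum by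
(I5)), for every word `u` with `|u| > m` there are a head position `h` on `#u` and a pebble
stack `peb` of length `m` with `Φ₁(peb) = α` and `Φ₂(h,peb) = b`. -/
theorem consistent_pair_realizable
    (k : ℕ) (hk : 1 ≤ k)
    (α : Fin k → Fin k → Bool) (b : Fin k → Bool)
    (hcons : BasicConsistent α b)
    (m : ℕ) (hm : m = (Finset.univ.filter (fun i : Fin k => α i i = true)).card)
    {Sg : Type} (u : List Sg) (hu : m < u.length) :
    ∃ (h : ℕ) (peb : List ℕ),
      h ≤ u.length ∧ peb.length = m ∧ (∀ x ∈ peb, x ≤ u.length) ∧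
      Phi1 k peb = α ∧ Phi2 k h peb = b := by
  obtain ⟨hsym, htrans, hI2, hI3, hI4, hI5⟩ := hcons
  set S := Finset.univ.filter (fun i : Fin k => α i i = true) with hS
  have hmem : ∀ i : Fin k, α i i = true ↔ (i : ℕ) < m := by
    intro i
    constructor
    · intro hi
      have hsub : Finset.Iic i ⊆ S := by
        intro j hj
        simp only [Finset.mem_Iic] at hj
        simp only [hS, Finset.mem_filter, Finset.mem_univ, true_and]
        rcases lt_or_eq_of_le hj with h | h
        · exact hI5 j i h hi
        · exact h ▸ hi
      have := Finset.card_le_card hsub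
      rw [Fin.card_Iic] at this
      omega
    · intro hi
      by_contra hni
      have hsub : S ⊆ Finset.Iio i := by
        intro j hj
        simp only [hS, Finset.mem_filter, Finset.mem_univ, true_and] at hj
        simp only [Finset.mem_Iio]
        rcases lt_trichotomy j i with h | h | h
        · exact h
        · exact absurd (h ▸ hj) hni
        · exact absurd (hI5 i j h hj) hni
      have := Finset.card_le_card hsub
      rw [Fin.card_Iio] at this
      omega
  have hmk : m ≤ k := by
    rw [hm]
    calc S.card ≤ Finset.univ.card := Finset.card_le_univ S
    _ = k := by simp
  -- class representative
  have hTne : ∀ i : Fin k, α i i = true →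
      (Finset.univ.filter (fun j : Fin k => α i j = true)).Nonempty := by
    intro i hi; exact ⟨i, by simp [hi]⟩
  classical
  set f : Fin k → ℕ := fun i =>
    if hi : α i i = true then
      (((Finset.univ.filter (fun j : Fin k => α i j = true)).min' (hTne i hi)) : ℕ) + 1
    else 0 with hf
  have hrmem : ∀ (i : Fin k) (hi : α i i = true),
      α i ((Finset.univ.filter (fun j : Fin k => α i j = true)).min' (hTne i hi)) = true := by
    intro i hi
    have := Finset.min'_mem _ (hTne i hi)
    simpa using this
  have hfle : ∀ i : Fin k, f i ≤ m := by
    intro i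
    rw [hf]
    by_cases hi : α i i = true
    · simp only [hi, dif_pos]
      set r := (Finset.univ.filter (fun j : Fin k => α i j = true)).min' (hTne i hi)
      have hir : α i r = true := hrmem i hi
      have : α r r = true := (hI4 i r hir).2.1
      have := (hmem r).1 this
      omega
    · simp [hi]
  have hfeq : ∀ i j : Fin k, α i j = true → f i = f j := by
    intro i j hij
    have hi : α i i = true := (hI4 i j hij).1
    have hj : α j j = true := (hI4 i j hij).2.1
    have hTeq : (Finset.univ.filter (fun l : Fin k => α i l = true)) =
        (Finset.univ.filter (fun l : Fin k => α j l = true)) := by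
      ext l
      simp only [Finset.mem_filter, Finset.mem_univ, true_and]
      constructor
      · intro hil; exact htrans j i l (hsym i j hij) hil
      · intro hjl; exact htrans i j l hij hjl
    rw [hf]
    simp only [hi, hj, dif_pos]
    have hmJ : (Finset.univ.filter (fun l : Fin k => α j l = true)).min' (hTne j hj) ∈
        (Finset.univ.filter (fun l : Fin k => α i l = true)) := by
      rw [hTeq]; exact Finset.min'_mem _ _
    have hmI : (Finset.univ.filter (fun l : Fin k => α i l = true)).min' (hTne i hi) ∈
        (Finset.univ.filter (fun l : Fin k => α j l = true)) := by
      rw [← hTeq]; exact Finset.min'_mem _ _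
    have h1 := Finset.min'_le _ _ hmJ
    have h2 := Finset.min'_le _ _ hmI
    have : (Finset.univ.filter (fun l : Fin k => α i l = true)).min' (hTne i hi) =
        (Finset.univ.filter (fun l : Fin k => α j l = true)).min' (hTne j hj) :=
      le_antisymm h1 h2
    rw [this]
  have hfrev : ∀ i j : Fin k, α i i = true → α j j = true → f i = f j → α i j = true := by
    intro i j hi hj hfij
    rw [hf] at hfij
    simp only [hi, hj, dif_pos] at hfij
    set ri := (Finset.univ.filter (fun l : Fin k => α i l = true)).min' (hTne i hi) with hri
    set rj := (Finset.univ.filter (fun l : Fin k => α j l = true)).min' (hTne j hj) with hrj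
    have hriv : ri = rj := by
      apply Fin.ext; omega
    have h1 : α i ri = true := hrmem i hi
    have h2 : α j rj = true := hrmem j hj
    rw [← hriv] at h2
    exact htrans i ri j h1 (hsym j ri h2)
  set peb : List ℕ := List.ofFn (fun n : Fin m => f (n.castLE hmk)) with hpeb
  have hlen : peb.length = m := by simp [hpeb]
  have hget : ∀ (n : ℕ) (hn : n < m), peb.getD n 0 = f ((⟨n, hn⟩ : Fin m).castLE hmk) := by
    intro n hn
    rw [List.getD_eq_getElem peb 0 (by omega)]
    simp only [hpeb, List.getElem_ofFn]
  have hgetf : ∀ i : Fin k, (i : ℕ) < m → peb.getD (i : ℕ) 0 = f i := by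
    intro i hi
    rw [hget i hi]
    exact congrArg f (Fin.ext rfl)
  have hPhi1 : Phi1 k peb = α := by
    funext i j
    unfold Phi1
    by_cases hij : α i j = true
    · have hi : (i : ℕ) < m := (hmem i).1 (hI4 i j hij).1
      have hj : (j : ℕ) < m := (hmem j).1 (hI4 i j hij).2.1
      rw [hij]
      simp only [decide_eq_true_eq]
      refine ⟨by omega, by omega, ?_⟩
      rw [hgetf i hi, hgetf j hj]
      exact hfeq i j hij
    · rw [Bool.not_eq_true] at hij
      rw [hij]
      simp only [decide_eq_false_iff_not]
      rintro ⟨h1, h2, h3⟩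
      rw [hlen] at h1 h2
      have hi : α i i = true := (hmem i).2 h1
      have hj : α j j = true := (hmem j).2 h2
      rw [hgetf i h1, hgetf j h2] at h3
      have := hfrev i j hi hj h3
      simp [hij] at this
  by_cases hb : ∃ i : Fin k, b i = true
  · obtain ⟨i₀, hb₀⟩ := hb
    have hi₀ : α i₀ i₀ = true := hI2 i₀ hb₀
    refine ⟨f i₀, peb, by have := hfle i₀; omega, hlen, ?_, hPhi1, ?_⟩
    · intro x hx
      rw [hpeb, List.mem_ofFn] at hx
      obtain ⟨n, rfl⟩ := hx
      show f (Fin.castLE hmk n) ≤ u.length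
      have := hfle (Fin.castLE hmk n)
      omega
    · funext i
      unfold Phi2
      by_cases hbi : b i = true
      · have hi : α i i = true := hI2 i hbi
        have hilt : (i : ℕ) < m := (hmem i).1 hi
        rw [hbi]
        simp only [decide_eq_true_eq]
        refine ⟨by rw [hlen]; exact hilt, ?_⟩
        rw [hgetf i hilt]
        exact hfeq i i₀ (hI3 i i₀ hbi hb₀)
      · rw [Bool.not_eq_true] at hbi
        rw [hbi]
        simp only [decide_eq_false_iff_not]
        rintro ⟨h1, h2⟩
        rw [hlen] at h1
        have hi : α i i = true := (hmem i).2 h1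
        rw [hgetf i h1] at h2
        have haii0 : α i i₀ = true := hfrev i i₀ hi hi₀ h2
        have := (hI4 i i₀ haii0).2.2
        rw [hbi, hb₀] at this
        exact Bool.false_ne_true this
  · push_neg at hb
    refine ⟨0, peb, Nat.zero_le _, hlen, ?_, hPhi1, ?_⟩
    · intro x hx
      rw [hpeb, List.mem_ofFn] at hx
      obtain ⟨n, rfl⟩ := hx
      show f (Fin.castLE hmk n) ≤ u.length
      have := hfle (Fin.castLE hmk n)
      omega
    · funext i
      unfold Phi2
      have hbi : b i = false := by simpa using hb i
      rw [hbi]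
      simp only [decide_eq_false_iff_not]
      rintro ⟨h1, h2⟩
      rw [hlen] at h1
      have hi : α i i = true := (hmem i).2 h1
      rw [hgetf i h1, hf] at h2
      simp only [hi, dif_pos] at h2
      omega

end RevPeb
end

section
/- Let A be a k-pebble transducer with equality tests, and let B be the basic k-pebble transducer constructed from A via the consistency-pair construction. If A is deterministic, then B is deterministic. -/
namespace RevPeb

/-- The full test over the head encoded by a bit vector `b`:
`⋀_{i: b i}(h=p_i) ∧ ⋀_{i: ¬b i}¬(h=p_i)`. -/
def bitTest {k : ℕ} (b : Fin k → Bool) : Test k :=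
  (List.finRange k).map (fun i => (Atom.headPeb i, b i))

/-- The transition of the consistency-pair construction generated by a transition `t`
and a pair `(α, b)`. -/
def cpTrans {Q Sg : Type*} {k : ℕ} (t : PTrans Q Sg k)
    (α : Fin k → Fin k → Bool) (b : Fin k → Bool) :
    PTrans (Q × (Fin k → Fin k → Bool)) Sg k :=
  ⟨(t.src, α), t.letter, bitTest b, t.op, (t.tgt, opApplyAbs α b t.op)⟩

/-- The pair `(α, b)` is admissible for the transition `t`: it is basic-consistent and
abstractly satisfies the test and the operation of `t`. -/
def cpOK {Q Sg : Type*} {k : ℕ} (t : PTrans Q Sg k)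
    (α : Fin k → Fin k → Bool) (b : Fin k → Bool) : Prop :=
  BasicConsistent α b ∧ testSatAbs α b t.test ∧ opEnabledAbs α b t.op

/-- The consistency-pair construction: the basic `k`-pebble transducer `B` built from a
`k`-pebble transducer with equality tests `A`.  States are pairs of a state of `A` and a
`k×k` boolean matrix; for each transition `t` of `A` and each admissible pair `(α,b)`,
`B` has the transition `((t.src,α), a, b, op, (t.tgt, op(α,b)))` with the same output. -/
noncomputable def consistencyPair {Q Sg Gm : Type*} {k : ℕ} (A : PT Q Sg Gm k) :
    PT (Q × (Fin k → Fin k → Bool)) Sg Gm k where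
  dir := fun p => A.dir p.1
  qinit := (A.qinit, fun _ _ => false)
  qfin := (A.qfin, fun _ _ => false)
  δ := {t' | ∃ t ∈ A.δ, ∃ α b, cpOK t α b ∧ t' = cpTrans t α b}
  μ := fun t' => by
    classical
    exact if h : ∃ t, t ∈ A.δ ∧ ∃ α b, cpOK t α b ∧ t' = cpTrans t α b
      then A.μ h.choose else []

end RevPeb

/-!
Two transitions of the consistency-pair transducer enabled at a common configuration leave
the same state `(q, α)`, read the same letter, and, their tests being complete bit vectors
over the head, carry the same `b`. Every basic-consistent `(α, b)` is realized by a concrete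
pebble stack: pebbles with `b i` sit on the head, the others beyond it at a position coding
their row of `α`, so that two pebbles coincide exactly when `α` says so. Both underlying
transitions of `A` are enabled at that configuration, hence equal by determinism of `A`.
-/

namespace RevPeb

theorem row_eq_iff_of_symm_of_trans {ι : Type*} {r : ι → ι → Bool}
    (hsymm : ∀ i j, r i j = true → r j i = true)
    (htrans : ∀ i j m, r i j = true → r j m = true → r i m = true)
    {i j : ι} (hi : r i i = true) : r i = r j ↔ r i j = true := by
  constructor
  · intro hrow
    exact hsymm j i (hrow ▸ hi)
  · intro hij
    funext m
    apply Bool.eq_iff_iff.mpr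
    exact ⟨htrans j i m (hsymm i j hij), htrans i j m hij⟩

theorem testSat_bitTest_iff {k : ℕ} {peb : List ℕ} {h : ℕ} {b : Fin k → Bool} :
    testSat peb h (bitTest b) ↔ b = Phi2 k h peb := by
  rw [testSat, bitTest, List.forall_mem_map, funext_iff]
  refine forall_congr' fun i => ?_
  simp only [List.mem_finRange, true_implies, atomSat, Phi2]
  cases b i <;> simp

theorem letterAt_toList_length {Sg : Type*} (o : Option Sg) :
    letterAt o.toList o.toList.length = o := by
  cases o <;> simp [letterAt]

section Realization

variable {k : ℕ} {α : Fin k → Fin k → Bool} {b : Fin k → Bool}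

theorem exists_matDiag_eq_false (α : Fin k → Fin k → Bool) : ∃ n, matDiag α n = false :=
  ⟨k, by simp [matDiag]⟩

def numDropped (α : Fin k → Fin k → Bool) : ℕ :=
  Nat.find (exists_matDiag_eq_false α)

theorem numDropped_le (α : Fin k → Fin k → Bool) : numDropped α ≤ k :=
  Nat.find_min' _ (by simp [matDiag])

theorem matDiag_fin (α : Fin k → Fin k → Bool) (i : Fin k) : matDiag α i = α i i := by
  simp [matDiag]

theorem matDiag_antitone (hbc : BasicConsistent α b) :
    Antitone fun i => matDiag α i = true := by
  intro i j hij hj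
  simp only [matDiag] at hj ⊢
  split_ifs at hj with hjk
  rw [dif_pos (hij.trans_lt hjk)]
  rcases hij.lt_or_eq with hlt | rfl
  · exact hbc.2.2.2.2.2 _ _ hlt hj
  · exact hj

theorem matDiag_eq_true_iff (hbc : BasicConsistent α b) (i : ℕ) :
    matDiag α i = true ↔ i < numDropped α := by
  constructor
  · intro hi
    by_contra hle
    have := matDiag_antitone hbc (not_lt.mp hle) hi
    simp [numDropped, Nat.find_spec (exists_matDiag_eq_false α)] at this
  · intro hi
    simpa using Nat.find_min _ hi

theorem lt_numDropped_iff (hbc : BasicConsistent α b) (i : Fin k) :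
    (i : ℕ) < numDropped α ↔ α i i = true := by
  rw [← matDiag_eq_true_iff hbc, matDiag_fin]

def realPos (α : Fin k → Fin k → Bool) (b : Fin k → Bool) (h : ℕ) (i : Fin k) : ℕ :=
  if b i then h else h + 1 + Encodable.encode (List.ofFn (α i))

theorem realPos_eq_head_iff (h : ℕ) (i : Fin k) : realPos α b h i = h ↔ b i = true := by
  unfold realPos
  cases b i <;> simp
  omega

theorem realPos_eq_realPos_iff (hbc : BasicConsistent α b) (h : ℕ) {i j : Fin k}
    (hi : α i i = true) : realPos α b h i = realPos α b h j ↔ α i j = true := by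
  obtain ⟨hsymm, htrans, -, hI3, hI4, -⟩ := hbc
  have hrow := row_eq_iff_of_symm_of_trans hsymm htrans (j := j) hi
  have hbij : α i j = true → b i = b j := fun hij => (hI4 i j hij).2.2
  unfold realPos
  cases hbi : b i <;> cases hbj : b j
  · simp [Encodable.encode_injective.eq_iff, List.ofFn_injective.eq_iff, hrow]
  · exact iff_of_false (by simp; omega) fun hij => by simpa [hbi, hbj] using hbij hij
  · exact iff_of_false (by simp; omega) fun hij => by simpa [hbi, hbj] using hbij hij
  · simpa using hI3 i j hbi hbj

def realStack (α : Fin k → Fin k → Bool) (b : Fin k → Bool) (h : ℕ) : List ℕ :=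
  List.ofFn fun i : Fin (numDropped α) => realPos α b h (Fin.castLE (numDropped_le α) i)

theorem length_realStack (h : ℕ) : (realStack α b h).length = numDropped α := by
  simp [realStack]

theorem getD_realStack {h : ℕ} {i : Fin k} (hi : (i : ℕ) < numDropped α) :
    (realStack α b h).getD i 0 = realPos α b h i := by
  simp [realStack, List.getD_eq_getElem?_getD, hi]

theorem atomSat_realStack_iff (hbc : BasicConsistent α b) (h : ℕ) (a : Atom k) :
    atomSat (realStack α b h) h a ↔ atomSatAbs α b a := by
  cases a with
  | headPeb i =>
    simp only [atomSat, atomSatAbs, length_realStack]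
    constructor
    · rintro ⟨hi, hpos⟩
      rwa [getD_realStack hi, realPos_eq_head_iff] at hpos
    · intro hbi
      have hi := (lt_numDropped_iff hbc i).mpr (hbc.2.2.1 i hbi)
      rw [getD_realStack hi, realPos_eq_head_iff]
      exact ⟨hi, hbi⟩
  | pebPeb i j =>
    simp only [atomSat, atomSatAbs, length_realStack]
    constructor
    · rintro ⟨hi, hj, hpos⟩
      rwa [getD_realStack hi, getD_realStack hj,
        realPos_eq_realPos_iff hbc h ((lt_numDropped_iff hbc i).mp hi)] at hpos
    · intro hij
      obtain ⟨hii, hjj, -⟩ := hbc.2.2.2.2.1 i j hij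
      have hi := (lt_numDropped_iff hbc i).mpr hii
      have hj := (lt_numDropped_iff hbc j).mpr hjj
      rw [getD_realStack hi, getD_realStack hj, realPos_eq_realPos_iff hbc h hii]
      exact ⟨hi, hj, hij⟩

theorem testSat_realStack_iff (hbc : BasicConsistent α b) (h : ℕ) (φ : Test k) :
    testSat (realStack α b h) h φ ↔ testSatAbs α b φ := by
  simp only [testSat, testSatAbs, atomSat_realStack_iff hbc]

theorem opEnabled_realStack (hbc : BasicConsistent α b) (h : ℕ) {op : PebOp k}
    (hop : opEnabledAbs α b op) : opEnabled (realStack α b h) h op := by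
  have hdiag := matDiag_eq_true_iff hbc
  cases op with
  | nop => trivial
  | drop n =>
    obtain ⟨hnn, hprev⟩ := hop
    rw [← matDiag_fin α n, ← Bool.not_eq_true, hdiag] at hnn
    have : (n : ℕ) = 0 ∨ (n : ℕ) - 1 < numDropped α := hprev.imp_right (hdiag _).mp
    simp only [opEnabled, length_realStack]
    omega
  | lift n =>
    obtain ⟨hbn, hnext⟩ := hop
    have hn := (lt_numDropped_iff hbc n).mpr (hbc.2.2.1 n hbn)
    rw [← Bool.not_eq_true, hdiag] at hnext
    refine ⟨by simp only [length_realStack]; omega, ?_⟩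
    rwa [getD_realStack hn, realPos_eq_head_iff]

end Realization

theorem PT.enabled_realStack {Q Sg Gm : Type*} {k : ℕ} (A : PT Q Sg Gm k)
    {t : PTrans Q Sg k} {α : Fin k → Fin k → Bool} {b : Fin k → Bool}
    (ht : t ∈ A.δ) (hok : cpOK t α b) {u : List Sg} {h : ℕ} (hh : h ≤ u.length)
    (hlet : letterAt u h = t.letter) :
    A.Enabled u t ⟨t.src, realStack α b h, h⟩ :=
  ⟨⟨t.tgt, _, nextHead u.length h (A.dir t.tgt)⟩, ht, rfl, hh,
    (length_realStack h).trans_le (numDropped_le α), hlet,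
    (testSat_realStack_iff hok.1 h t.test).mpr hok.2.1, opEnabled_realStack hok.1 h hok.2.2,
    rfl, rfl, rfl⟩

/-- If `A` is deterministic then the basic `k`-pebble transducer obtained
from `A` by the consistency-pair construction is deterministic. -/
theorem consistencyPair_deterministic
    {Q Sg Gm : Type} {k : ℕ} (A : PT Q Sg Gm k)
    (hA : A.Deterministic) :
    (consistencyPair A).Deterministic := by
  rintro u _ _ _ ⟨-, ⟨t₁, ht₁, α, b, hok₁, rfl⟩, hq₁, -, -, hlet₁, htest₁, -⟩
    ⟨-, ⟨t₂, ht₂, α₂, b₂, hok₂, rfl⟩, hq₂, -, -, hlet₂, htest₂, -⟩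
  obtain ⟨hsrc, rfl⟩ : t₁.src = t₂.src ∧ α = α₂ := Prod.ext_iff.mp (hq₁.symm.trans hq₂)
  obtain rfl : b = b₂ :=
    (testSat_bitTest_iff.mp htest₁).trans (testSat_bitTest_iff.mp htest₂).symm
  have hlet : letterAt t₁.letter.toList t₁.letter.toList.length = t₂.letter :=
    (letterAt_toList_length _).trans (hlet₁.symm.trans hlet₂)
  have ht₂' := A.enabled_realStack ht₂ hok₂ le_rfl hlet
  rw [← hsrc] at ht₂'
  rw [hA _ t₁ t₂ _ (A.enabled_realStack ht₁ hok₁ le_rfl (letterAt_toList_length _)) ht₂']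

end RevPeb
end
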